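/- (Recovery guarantee for HiIHT.) Let N₁, N₂, N₃ and s₁, s₂, s₃ be positive integers with 3s_k ≤ N_k for all k, let A ∈ ℂ^{m×N₁N₂N₃}, and suppose the hierarchical restricted isometry constant δ := δ_{(3s₁,3s₂,3s₃)}(A) satisfies δ < 1/√3. Let x ∈ ℂ^{N₁·N₂·N₃} be (s₁,s₂,s₃)-Hi-sparse, let z ∈ ℂ^m, and let y = Ax + z. Define a sequence by x⁽⁰⁾ = 0 and, for i ≥ 1: set x_temp = x⁽ⁱ⁻¹⁾ + Aᴴ(y − Ax⁽ⁱ⁻¹⁾), let S⁽ⁱ⁾ be the support of any minimizer of ‖x_temp − w‖ over all (s₁,s₂,s₃)-Hi-sparse vectors w ∈ ℂ^{N₁·N₂·N₃}, and set x⁽ⁱ⁾ equal to x_temp on S⁽ⁱ⁾ and zero elsewhere. Then for all i ≥ 0, ‖x − x⁽ⁱ⁾‖ ≤ κⁱ‖x‖ + τ‖z‖, where κ = √3·δ < 1 and τ = 2.18/(1−κ). -/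

import Mathlib

open scoped Classical

noncomputable section

/-- A vector is `s`-sparse if at most `s` of its entries are nonzero. -/
def Sparse {ι : Type*} [Fintype ι] (s : ℕ) (x : ι → ℂ) : Prop :=
  (Finset.univ.filter fun i => x i ≠ 0).card ≤ s

/-- Squared Euclidean norm. -/
def sqNorm {ι : Type*} [Fintype ι] (x : ι → ℂ) : ℝ := ∑ i, ‖x i‖ ^ 2

/-- Euclidean norm. -/
def eucNorm {ι : Type*} [Fintype ι] (x : ι → ℂ) : ℝ := Real.sqrt (sqNorm x)

/-- The restricted isometry constant `δ_s(A)`: the smallest `δ ≥ 0` such that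
`(1−δ)‖x‖² ≤ ‖Ax‖² ≤ (1+δ)‖x‖²` for every `s`-sparse `x`. -/
def RIPconst {m n : Type*} [Fintype m] [Fintype n] (A : Matrix m n ℂ) (s : ℕ) : ℝ :=
  sInf {δ : ℝ | 0 ≤ δ ∧ ∀ x : n → ℂ, Sparse s x →
    (1 - δ) * sqNorm x ≤ sqNorm (A.mulVec x) ∧ sqNorm (A.mulVec x) ≤ (1 + δ) * sqNorm x}

/-- `(s₁,s₂,s₃)`-hierarchical sparsity of a 3-level block vector: at most `s₁`
of the `N₁` level-1 blocks are nonzero, within each block at most `s₂` of the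
`N₂` level-2 blocks are nonzero, and each of those contains at most `s₃`
nonzero entries. -/
def HiSparse3 {N₁ N₂ N₃ : ℕ} (s₁ s₂ s₃ : ℕ) (x : Fin N₁ × Fin N₂ × Fin N₃ → ℂ) : Prop :=
  (Finset.univ.filter fun i₁ : Fin N₁ => (fun p : Fin N₂ × Fin N₃ => x (i₁, p)) ≠ 0).card ≤ s₁ ∧
  ∀ i₁ : Fin N₁,
    (Finset.univ.filter fun i₂ : Fin N₂ => (fun i₃ : Fin N₃ => x (i₁, i₂, i₃)) ≠ 0).card ≤ s₂ ∧
    ∀ i₂ : Fin N₂, Sparse s₃ (fun i₃ : Fin N₃ => x (i₁, i₂, i₃))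

/-- The hierarchical restricted isometry constant `δ_{(s₁,s₂,s₃)}(A)` of a
matrix acting on 3-level block vectors. -/
def HiRIPconst3 {m : Type*} [Fintype m] {N₁ N₂ N₃ : ℕ}
    (A : Matrix m (Fin N₁ × Fin N₂ × Fin N₃) ℂ) (s₁ s₂ s₃ : ℕ) : ℝ :=
  sInf {δ : ℝ | 0 ≤ δ ∧ ∀ x : Fin N₁ × Fin N₂ × Fin N₃ → ℂ, HiSparse3 s₁ s₂ s₃ x →
    (1 - δ) * sqNorm x ≤ sqNorm (A.mulVec x) ∧ sqNorm (A.mulVec x) ≤ (1 + δ) * sqNorm x}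

open scoped Matrix

/-!
Write `a = xⁿ + Aᴴ(y - Axⁿ)` for the gradient step, `g = x - a` for its error and `W` for the
support of the best Hi-sparse approximation `w` of `a`, so that `xⁿ⁺¹ = a` on `W` and `0` off it.
Since `a` restricted to `W` approximates `a` at least as well as `a` restricted to `supp x`, the
mass of `a` on `supp x \ W` is at most its mass on `W \ supp x`, where `a = -g`; splitting
`x - xⁿ⁺¹` over `W` and its complement then gives `‖x - xⁿ⁺¹‖ ≤ √3 ‖g‖` on `supp x ∪ W`.
All vectors supported on `Ω = supp x ∪ W ∪ supp xⁿ` are `(3s₁,3s₂,3s₃)`-Hi-sparse, and there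
`g = (I - AᴴA)(x - xⁿ) - Aᴴz`. By polarization the HiRIP makes the compression of `I - AᴴA` to
`Ω` a map of norm at most `δ`, and `Aᴴ` followed by restriction to `Ω` has norm at most
`√(1 + δ)`. Hence `‖x - xⁿ⁺¹‖ ≤ κ ‖x - xⁿ‖ + √3 √(1 + δ) ‖z‖` with `√3 √(1 + δ) ≤ 2.18`,
and the bound follows by iterating this contraction.
-/

section EuclideanNorm

variable {ι : Type*} [Fintype ι]

lemma sqNorm_eq_norm_toLp_sq (x : ι → ℂ) :
    sqNorm x = ‖(WithLp.toLp 2 x : EuclideanSpace ℂ ι)‖ ^ 2 :=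
  (EuclideanSpace.norm_sq_eq _).symm

lemma eucNorm_eq_norm_toLp (x : ι → ℂ) :
    eucNorm x = ‖(WithLp.toLp 2 x : EuclideanSpace ℂ ι)‖ :=
  (EuclideanSpace.norm_eq _).symm

lemma sqNorm_nonneg (x : ι → ℂ) : 0 ≤ sqNorm x :=
  Finset.sum_nonneg fun _ _ => sq_nonneg _

lemma eucNorm_nonneg (x : ι → ℂ) : 0 ≤ eucNorm x := Real.sqrt_nonneg _

lemma eucNorm_sq (x : ι → ℂ) : eucNorm x ^ 2 = sqNorm x :=
  Real.sq_sqrt (sqNorm_nonneg x)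

lemma eucNorm_sub_le (x y : ι → ℂ) : eucNorm (x - y) ≤ eucNorm x + eucNorm y := by
  simp only [eucNorm_eq_norm_toLp, WithLp.toLp_sub]
  exact norm_sub_le _ _

lemma sqNorm_add_le (x y : ι → ℂ) : sqNorm (x + y) ≤ 2 * (sqNorm x + sqNorm y) := by
  simp only [sqNorm, Finset.mul_sum, ← Finset.sum_add_distrib, Pi.add_apply]
  refine Finset.sum_le_sum fun j _ => ?_
  nlinarith [norm_add_le (x j) (y j), norm_nonneg (x j + y j), sq_nonneg (‖x j‖ - ‖y j‖)]

lemma sqNorm_neg (x : ι → ℂ) : sqNorm (-x) = sqNorm x := by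
  simp [sqNorm]

lemma sqNorm_indicator_add_sqNorm_indicator_compl (s : Set ι) (x : ι → ℂ) :
    sqNorm (s.indicator x) + sqNorm (sᶜ.indicator x) = sqNorm x := by
  simp only [sqNorm, ← Finset.sum_add_distrib]
  refine Finset.sum_congr rfl fun j _ => ?_
  by_cases hj : j ∈ s <;> simp [hj]

lemma sqNorm_indicator_le_of_subset {s t : Set ι} (h : s ⊆ t) (x : ι → ℂ) :
    sqNorm (s.indicator x) ≤ sqNorm (t.indicator x) := by
  rw [← sqNorm_indicator_add_sqNorm_indicator_compl s (t.indicator x),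
    Set.indicator_indicator, Set.inter_eq_left.2 h]
  exact le_add_of_nonneg_right (sqNorm_nonneg _)

lemma sqNorm_indicator_eq_re_inner (s : Set ι) (x : ι → ℂ) :
    sqNorm (s.indicator x) = RCLike.re
      (inner ℂ (WithLp.toLp 2 (s.indicator x) : EuclideanSpace ℂ ι) (WithLp.toLp 2 x)) := by
  rw [EuclideanSpace.inner_toLp_toLp, sqNorm, dotProduct, map_sum]
  refine Finset.sum_congr rfl fun j _ => ?_
  by_cases hj : j ∈ s
  · simp [hj, Complex.mul_conj, Complex.normSq_eq_norm_sq, -Complex.ofReal_pow]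
  · simp [hj]

lemma inner_toLp_conjTranspose_mulVec {m : Type*} [Fintype m] (A : Matrix m ι ℂ)
    (x : ι → ℂ) (z : m → ℂ) :
    inner ℂ (WithLp.toLp 2 x : EuclideanSpace ℂ ι) (WithLp.toLp 2 (Aᴴ *ᵥ z)) =
      inner ℂ (WithLp.toLp 2 (A *ᵥ x) : EuclideanSpace ℂ m) (WithLp.toLp 2 z) := by
  change inner ℂ _ (Aᴴ.toEuclideanLin (WithLp.toLp 2 z)) =
    inner ℂ (A.toEuclideanLin (WithLp.toLp 2 x)) _
  rw [Matrix.toEuclideanLin_conjTranspose_eq_adjoint, LinearMap.adjoint_inner_right]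

end EuclideanNorm

section NearIsometry

variable {𝕜 E F : Type*} [RCLike 𝕜] [NormedAddCommGroup E] [InnerProductSpace 𝕜 E]
  [NormedAddCommGroup F] [InnerProductSpace 𝕜 F] {T : E →ₗ[𝕜] F} {V : Submodule 𝕜 E} {δ : ℝ}

lemma abs_re_inner_sub_re_inner_map_le_half_sum
    (hT : ∀ v ∈ V, |‖T v‖ ^ 2 - ‖v‖ ^ 2| ≤ δ * ‖v‖ ^ 2) {u v : E} (hu : u ∈ V) (hv : v ∈ V) :
    |RCLike.re (inner 𝕜 u v) - RCLike.re (inner 𝕜 (T u) (T v))| ≤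
      δ * (‖u‖ ^ 2 + ‖v‖ ^ 2) / 2 := by
  have hadd := hT _ (V.add_mem hu hv)
  have hsub := hT _ (V.sub_mem hu hv)
  have hpar : δ * ‖u + v‖ ^ 2 + δ * ‖u - v‖ ^ 2 = 2 * δ * (‖u‖ ^ 2 + ‖v‖ ^ 2) := by
    linear_combination δ * parallelogram_law_with_norm 𝕜 u v
  rw [map_add] at hadd
  rw [map_sub] at hsub
  rw [re_inner_eq_norm_add_mul_self_sub_norm_sub_mul_self_div_four,
    re_inner_eq_norm_add_mul_self_sub_norm_sub_mul_self_div_four, ← sq, ← sq, ← sq, ← sq]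
  rw [abs_le] at hadd hsub ⊢
  constructor <;> linarith

lemma abs_re_inner_sub_re_inner_map_le
    (hT : ∀ v ∈ V, |‖T v‖ ^ 2 - ‖v‖ ^ 2| ≤ δ * ‖v‖ ^ 2) {u v : E} (hu : u ∈ V) (hv : v ∈ V) :
    |RCLike.re (inner 𝕜 u v) - RCLike.re (inner 𝕜 (T u) (T v))| ≤ δ * ‖u‖ * ‖v‖ := by
  rcases eq_or_ne u 0 with rfl | hu0
  · simp
  rcases eq_or_ne v 0 with rfl | hv0
  · simp
  -- rescale `u` to the length of `v`, where the two bounds agree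
  set c : ℝ := ‖v‖ / ‖u‖ with hc_def
  have hc : 0 < c := by positivity
  have hcu : ‖(c : 𝕜) • u‖ = ‖v‖ := by
    rw [norm_smul, RCLike.norm_ofReal, abs_of_pos hc, div_mul_cancel₀ _ (norm_ne_zero_iff.2 hu0)]
  have h := abs_re_inner_sub_re_inner_map_le_half_sum hT (V.smul_mem (c : 𝕜) hu) hv
  rw [hcu, map_smul, inner_smul_real_left, inner_smul_real_left, RCLike.smul_re, RCLike.smul_re,
    ← mul_sub, abs_mul, abs_of_pos hc] at h
  have hδ : δ * ‖v‖ ^ 2 = c * (δ * ‖u‖ * ‖v‖) := by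
    rw [hc_def]
    field_simp
  rw [← mul_le_mul_iff_right₀ hc, ← hδ]
  linarith

end NearIsometry

section SupportedRIP

variable {m ι : Type*} [Fintype m] [Fintype ι] {A : Matrix m ι ℂ} {Ω : Set ι} {δ : ℝ}

lemma eucNorm_indicator_sub_conjTranspose_mulVec_mulVec_le (hδ : 0 ≤ δ)
    (hA : ∀ v : ι → ℂ, Function.support v ⊆ Ω →
      (1 - δ) * sqNorm v ≤ sqNorm (A *ᵥ v) ∧ sqNorm (A *ᵥ v) ≤ (1 + δ) * sqNorm v)
    {u : ι → ℂ} (hu : Function.support u ⊆ Ω) :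
    eucNorm (Ω.indicator (u - Aᴴ *ᵥ (A *ᵥ u))) ≤ δ * eucNorm u := by
  set V : Submodule ℂ (EuclideanSpace ℂ ι) :=
    (Submodule.pi Ωᶜ fun _ => ⊥).comap (WithLp.linearEquiv 2 ℂ (ι → ℂ)).toLinearMap
  have mem_V {v : ι → ℂ} (hv : Function.support v ⊆ Ω) : WithLp.toLp 2 v ∈ V := by
    simpa [V, Submodule.mem_pi] using fun j hj => Function.notMem_support.1 (mt (@hv j) hj)
  have hV : ∀ v ∈ V, |‖A.toEuclideanLin v‖ ^ 2 - ‖v‖ ^ 2| ≤ δ * ‖v‖ ^ 2 := by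
    intro v hv
    have hsupp : Function.support v.ofLp ⊆ Ω := by
      simp only [V, Submodule.mem_comap, Submodule.mem_pi, Submodule.mem_bot] at hv
      exact fun j hj => by_contra fun hjΩ => hj (hv j hjΩ)
    obtain ⟨hlow, hup⟩ := hA _ hsupp
    rw [Matrix.toLpLin_apply, ← sqNorm_eq_norm_toLp_sq, ← sqNorm_eq_norm_toLp_sq, abs_le]
    constructor <;> linarith
  set p := Ω.indicator (u - Aᴴ *ᵥ (A *ᵥ u))
  have hp : sqNorm p ≤ δ * eucNorm p * eucNorm u :=
    calc sqNorm p
        = RCLike.re (inner ℂ (WithLp.toLp 2 p : EuclideanSpace ℂ ι) (WithLp.toLp 2 u)) -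
            RCLike.re (inner ℂ (WithLp.toLp 2 (A *ᵥ p) : EuclideanSpace ℂ m)
              (WithLp.toLp 2 (A *ᵥ u))) := by
          rw [sqNorm_indicator_eq_re_inner, WithLp.toLp_sub, inner_sub_right, map_sub,
            inner_toLp_conjTranspose_mulVec]
      _ ≤ δ * eucNorm p * eucNorm u := by
          rw [eucNorm_eq_norm_toLp, eucNorm_eq_norm_toLp]
          exact (le_abs_self _).trans (abs_re_inner_sub_re_inner_map_le hV
            (mem_V Set.support_indicator_subset) (mem_V hu))
  rw [← eucNorm_sq] at hp
  nlinarith [eucNorm_nonneg p, mul_nonneg hδ (eucNorm_nonneg u)]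

lemma eucNorm_indicator_conjTranspose_mulVec_le
    (hA : ∀ v : ι → ℂ, Function.support v ⊆ Ω → sqNorm (A *ᵥ v) ≤ (1 + δ) * sqNorm v)
    (z : m → ℂ) :
    eucNorm (Ω.indicator (Aᴴ *ᵥ z)) ≤ √(1 + δ) * eucNorm z := by
  set p := Ω.indicator (Aᴴ *ᵥ z)
  have hAp : eucNorm (A *ᵥ p) ≤ √(1 + δ) * eucNorm p := by
    rw [eucNorm, eucNorm, ← Real.sqrt_mul' _ (sqNorm_nonneg p)]
    exact Real.sqrt_le_sqrt (hA p Set.support_indicator_subset)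
  have hp : sqNorm p ≤ eucNorm p * (√(1 + δ) * eucNorm z) :=
    calc sqNorm p
        = RCLike.re (inner ℂ (WithLp.toLp 2 (A *ᵥ p) : EuclideanSpace ℂ m) (WithLp.toLp 2 z)) := by
          rw [sqNorm_indicator_eq_re_inner, inner_toLp_conjTranspose_mulVec]
      _ ≤ eucNorm (A *ᵥ p) * eucNorm z := by
          rw [eucNorm_eq_norm_toLp, eucNorm_eq_norm_toLp]
          exact re_inner_le_norm _ _
      _ ≤ eucNorm p * (√(1 + δ) * eucNorm z) := by
          nlinarith [eucNorm_nonneg z]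
  rw [← eucNorm_sq] at hp
  nlinarith [eucNorm_nonneg p, mul_nonneg (Real.sqrt_nonneg (1 + δ)) (eucNorm_nonneg z)]

lemma eucNorm_indicator_sub_gradient_step_le (hδ : 0 ≤ δ)
    (hA : ∀ v : ι → ℂ, Function.support v ⊆ Ω →
      (1 - δ) * sqNorm v ≤ sqNorm (A *ᵥ v) ∧ sqNorm (A *ᵥ v) ≤ (1 + δ) * sqNorm v)
    {x x' : ι → ℂ} (hx : Function.support x ⊆ Ω) (hx' : Function.support x' ⊆ Ω)
    (z : m → ℂ) :
    eucNorm (Ω.indicator (x - (x' + Aᴴ *ᵥ (A *ᵥ x + z - A *ᵥ x')))) ≤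
      δ * eucNorm (x - x') + √(1 + δ) * eucNorm z := by
  have hsplit : x - (x' + Aᴴ *ᵥ (A *ᵥ x + z - A *ᵥ x')) =
      ((x - x') - Aᴴ *ᵥ (A *ᵥ (x - x'))) - Aᴴ *ᵥ z := by
    simp only [Matrix.mulVec_sub, Matrix.mulVec_add]
    abel
  rw [hsplit, Set.indicator_sub']
  refine (eucNorm_sub_le _ _).trans (add_le_add ?_ ?_)
  · exact eucNorm_indicator_sub_conjTranspose_mulVec_mulVec_le hδ hA
      ((Function.support_sub x x').trans (Set.union_subset hx hx'))
  · exact eucNorm_indicator_conjTranspose_mulVec_le (fun v hv => (hA v hv).2) z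

end SupportedRIP

lemma ite_ne_zero_eq_indicator_support {ι : Type*} (w a : ι → ℂ) :
    (fun j => if w j ≠ 0 then a j else 0) = (Function.support w).indicator a :=
  funext fun j => by simp [Set.indicator_apply]

section Thresholding

variable {ι : Type*} [Fintype ι]

lemma sqNorm_indicator_compl_support_le (w a : ι → ℂ) :
    sqNorm ((Function.support w)ᶜ.indicator a) ≤ sqNorm (a - w) := by
  refine Finset.sum_le_sum fun j _ => ?_
  by_cases hj : w j = 0 <;> simp [hj]

lemma sqNorm_sub_indicator_le_three_mul {x a : ι → ℂ} {W : Set ι}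
    (hbest : sqNorm (Wᶜ.indicator a) ≤ sqNorm ((Function.support x)ᶜ.indicator a)) :
    sqNorm (x - W.indicator a) ≤ 3 * sqNorm ((Function.support x ∪ W).indicator (x - a)) := by
  set S := Function.support x
  set g := x - a
  have hx : ∀ j ∉ S, x j = 0 := fun j hj => Function.notMem_support.1 hj
  have hsplit : sqNorm (x - W.indicator a) = sqNorm (W.indicator g) + sqNorm (Wᶜ.indicator x) := by
    rw [← sqNorm_indicator_add_sqNorm_indicator_compl W]
    congr 2 <;> funext j <;> by_cases hj : j ∈ W <;> simp [hj, g]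
  have hout : Wᶜ.indicator x = (S \ W).indicator g + (S \ W).indicator a := by
    funext j
    by_cases hjW : j ∈ W
    · simp [hjW]
    · by_cases hjS : j ∈ S
      · simp [hjW, hjS, g]
      · simp [hjW, hjS, hx j hjS]
  -- `x` vanishes on `W \ S`, so there `g = -a`
  have hcap : sqNorm ((S \ W).indicator a) ≤ sqNorm ((W \ S).indicator g) := by
    have hWS : (W \ S).indicator g = -(W ∩ Sᶜ).indicator a := by
      funext j
      by_cases hjS : j ∈ S
      · simp [hjS]
      · by_cases hjW : j ∈ W <;> simp [hjW, hjS, hx j hjS, g]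
    have e₁ := sqNorm_indicator_add_sqNorm_indicator_compl S (Wᶜ.indicator a)
    have e₂ := sqNorm_indicator_add_sqNorm_indicator_compl W (Sᶜ.indicator a)
    rw [Set.indicator_indicator, Set.indicator_indicator] at e₁ e₂
    rw [Set.inter_comm Wᶜ Sᶜ] at e₂
    rw [hWS, sqNorm_neg, Set.sdiff_eq]
    linarith
  have hG : sqNorm ((S \ W).indicator g) + sqNorm (W.indicator g) =
      sqNorm ((S ∪ W).indicator g) := by
    rw [← sqNorm_indicator_add_sqNorm_indicator_compl W ((S ∪ W).indicator g),
      Set.indicator_indicator, Set.indicator_indicator,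
      Set.inter_eq_left.2 Set.subset_union_right, add_comm]
    congr 3
    ext j
    simp only [Set.mem_sdiff, Set.mem_inter_iff, Set.mem_compl_iff, Set.mem_union]
    tauto
  have hγ := sqNorm_indicator_le_of_subset (Set.sdiff_subset : W \ S ⊆ W) g
  have hW := sqNorm_indicator_le_of_subset (Set.subset_union_right : W ⊆ S ∪ W) g
  have htri := sqNorm_add_le ((S \ W).indicator g) ((S \ W).indicator a)
  rw [hsplit, hout]
  linarith

end Thresholding

section HiSparse

variable {N₁ N₂ N₃ s₁ s₂ s₃ : ℕ}

lemma hiSparse3_zero : HiSparse3 s₁ s₂ s₃ (0 : Fin N₁ × Fin N₂ × Fin N₃ → ℂ) := by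
  simp [HiSparse3, Sparse, ← Pi.zero_def]

lemma HiSparse3.of_support_subset {x v : Fin N₁ × Fin N₂ × Fin N₃ → ℂ}
    (hx : HiSparse3 s₁ s₂ s₃ x) (h : Function.support v ⊆ Function.support x) :
    HiSparse3 s₁ s₂ s₃ v := by
  have h' : ∀ j, v j ≠ 0 → x j ≠ 0 := fun j => @h j
  refine ⟨(Finset.card_le_card fun i₁ => ?_).trans hx.1, fun i₁ =>
    ⟨(Finset.card_le_card fun i₂ => ?_).trans (hx.2 i₁).1, fun i₂ =>
      (Finset.card_le_card fun i₃ => ?_).trans ((hx.2 i₁).2 i₂)⟩⟩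
  all_goals simp only [Finset.mem_filter, Finset.mem_univ, true_and, Function.ne_iff]
  exacts [fun ⟨p, hp⟩ => ⟨p, h' _ hp⟩, fun ⟨p, hp⟩ => ⟨p, h' _ hp⟩, h' _]

lemma card_filter_le_card_filter_add_add {α : Type*} [Fintype α] {p q r t : α → Prop}
    [DecidablePred p] [DecidablePred q] [DecidablePred r] [DecidablePred t]
    (h : ∀ i, p i → q i ∨ r i ∨ t i) :
    (Finset.univ.filter p).card ≤
      (Finset.univ.filter q).card + (Finset.univ.filter r).card + (Finset.univ.filter t).card :=
  calc (Finset.univ.filter p).card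
      ≤ (Finset.univ.filter q ∪ Finset.univ.filter r ∪ Finset.univ.filter t).card :=
        Finset.card_le_card fun i hi => by
          simp only [Finset.mem_union, Finset.mem_filter, Finset.mem_univ, true_and] at hi ⊢
          rcases h i hi with hq | hr | ht
          exacts [Or.inl (Or.inl hq), Or.inl (Or.inr hr), Or.inr ht]
    _ ≤ _ := (Finset.card_union_le _ _).trans (Nat.add_le_add_right (Finset.card_union_le _ _) _)

lemma HiSparse3.of_support_subset_union₃ {a b c v : Fin N₁ × Fin N₂ × Fin N₃ → ℂ}
    (ha : HiSparse3 s₁ s₂ s₃ a) (hb : HiSparse3 s₁ s₂ s₃ b) (hc : HiSparse3 s₁ s₂ s₃ c)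
    (h : Function.support v ⊆ Function.support a ∪ Function.support b ∪ Function.support c) :
    HiSparse3 (3 * s₁) (3 * s₂) (3 * s₃) v := by
  have hpt : ∀ j, v j ≠ 0 → a j ≠ 0 ∨ b j ≠ 0 ∨ c j ≠ 0 := fun j hj => by
    rcases h hj with (hj | hj) | hj
    exacts [Or.inl hj, Or.inr (Or.inl hj), Or.inr (Or.inr hj)]
  have hblock : ∀ {β : Type} (e : β → Fin N₁ × Fin N₂ × Fin N₃), v ∘ e ≠ 0 →
      a ∘ e ≠ 0 ∨ b ∘ e ≠ 0 ∨ c ∘ e ≠ 0 := fun e he => by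
    obtain ⟨p, hp⟩ := Function.ne_iff.1 he
    rcases hpt _ hp with hp | hp | hp
    exacts [Or.inl (Function.ne_iff.2 ⟨p, hp⟩), Or.inr (Or.inl (Function.ne_iff.2 ⟨p, hp⟩)),
      Or.inr (Or.inr (Function.ne_iff.2 ⟨p, hp⟩))]
  refine ⟨?_, fun i₁ => ⟨?_, fun i₂ => ?_⟩⟩
  · have := card_filter_le_card_filter_add_add fun i₁ => hblock (β := Fin N₂ × Fin N₃) (i₁, ·)
    simp only [Function.comp_def] at this
    linarith [ha.1, hb.1, hc.1]
  · have := card_filter_le_card_filter_add_add fun i₂ => hblock (β := Fin N₃) (i₁, i₂, ·)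
    simp only [Function.comp_def] at this
    linarith [(ha.2 i₁).1, (hb.2 i₁).1, (hc.2 i₁).1]
  · have := card_filter_le_card_filter_add_add fun i₃ => hpt (i₁, i₂, i₃)
    have bounds := And.intro ((ha.2 i₁).2 i₂) (And.intro ((hb.2 i₁).2 i₂) ((hc.2 i₁).2 i₂))
    unfold Sparse at bounds ⊢
    linarith [bounds.1, bounds.2.1, bounds.2.2]

end HiSparse

lemma hiIHT_step_error {m N₁ N₂ N₃ s₁ s₂ s₃ : ℕ} {A : Matrix (Fin m) (Fin N₁ × Fin N₂ × Fin N₃) ℂ}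
    {δ : ℝ} (hδ : 0 ≤ δ)
    (hA : ∀ v, HiSparse3 (3 * s₁) (3 * s₂) (3 * s₃) v →
      (1 - δ) * sqNorm v ≤ sqNorm (A *ᵥ v) ∧ sqNorm (A *ᵥ v) ≤ (1 + δ) * sqNorm v)
    {x x' w a : Fin N₁ × Fin N₂ × Fin N₃ → ℂ} (hx : HiSparse3 s₁ s₂ s₃ x)
    (hx' : HiSparse3 s₁ s₂ s₃ x') (hw : HiSparse3 s₁ s₂ s₃ w) (z : Fin m → ℂ)
    (ha : a = x' + Aᴴ *ᵥ (A *ᵥ x + z - A *ᵥ x'))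
    (hmin : ∀ w', HiSparse3 s₁ s₂ s₃ w' → eucNorm (a - w) ≤ eucNorm (a - w')) :
    eucNorm (x - (Function.support w).indicator a) ≤
      √3 * (δ * eucNorm (x - x') + √(1 + δ) * eucNorm z) := by
  set S := Function.support x
  set W := Function.support w
  set Ω := S ∪ W ∪ Function.support x'
  have hbest : sqNorm (Wᶜ.indicator a) ≤ sqNorm (Sᶜ.indicator a) :=
    calc sqNorm (Wᶜ.indicator a)
        ≤ sqNorm (a - w) := sqNorm_indicator_compl_support_le w a
      _ ≤ sqNorm (a - S.indicator a) := by
          rw [← eucNorm_sq, ← eucNorm_sq]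
          exact pow_le_pow_left₀ (eucNorm_nonneg _)
            (hmin _ (hx.of_support_subset Set.support_indicator_subset)) 2
      _ = sqNorm (Sᶜ.indicator a) := by rw [Set.indicator_compl]
  have hthresh : eucNorm (x - W.indicator a) ≤ √3 * eucNorm (Ω.indicator (x - a)) := by
    rw [eucNorm, eucNorm, ← Real.sqrt_mul (by norm_num)]
    refine Real.sqrt_le_sqrt ((sqNorm_sub_indicator_le_three_mul hbest).trans ?_)
    gcongr
    exact sqNorm_indicator_le_of_subset Set.subset_union_left _
  have hΩ : ∀ v, Function.support v ⊆ Ω →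
      (1 - δ) * sqNorm v ≤ sqNorm (A *ᵥ v) ∧ sqNorm (A *ᵥ v) ≤ (1 + δ) * sqNorm v :=
    fun v hv => hA v (HiSparse3.of_support_subset_union₃ hx hw hx' hv)
  refine hthresh.trans (mul_le_mul_of_nonneg_left ?_ (Real.sqrt_nonneg 3))
  rw [ha]
  exact eucNorm_indicator_sub_gradient_step_le hδ hΩ
    (Set.subset_union_left.trans Set.subset_union_left) Set.subset_union_right z

open scoped Matrix.Norms.L2Operator in
lemma exists_sqNorm_mulVec_le {m ι : Type*} [Fintype m] [Fintype ι] (A : Matrix m ι ℂ) :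
    ∃ C, 0 ≤ C ∧ ∀ v, sqNorm (A *ᵥ v) ≤ C * sqNorm v :=
  ⟨‖A‖ ^ 2, by positivity, fun v => by
    rw [sqNorm_eq_norm_toLp_sq, sqNorm_eq_norm_toLp_sq, ← mul_pow]
    exact pow_le_pow_left₀ (norm_nonneg _) (A.l2_opNorm_mulVec (WithLp.toLp 2 v)) 2⟩

lemma hiRIPconst3_mem {m N₁ N₂ N₃ : ℕ} (A : Matrix (Fin m) (Fin N₁ × Fin N₂ × Fin N₃) ℂ)
    (s₁ s₂ s₃ : ℕ) :
    HiRIPconst3 A s₁ s₂ s₃ ∈ {δ : ℝ | 0 ≤ δ ∧ ∀ v, HiSparse3 s₁ s₂ s₃ v →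
      (1 - δ) * sqNorm v ≤ sqNorm (A *ᵥ v) ∧ sqNorm (A *ᵥ v) ≤ (1 + δ) * sqNorm v} := by
  obtain ⟨C, hC, hAC⟩ := exists_sqNorm_mulVec_le A
  refine IsClosed.csInf_mem ?_ ⟨C + 1, by positivity, fun v _ => ⟨?_, ?_⟩⟩ ⟨0, fun _ h => h.1⟩
  · simp only [Set.ofPred_and, Set.ofPred_forall]
    exact isClosed_le continuous_const continuous_id |>.inter <|
      isClosed_iInter fun v => isClosed_iInter fun _ =>
        (isClosed_le (by fun_prop) continuous_const).inter
          (isClosed_le continuous_const (by fun_prop))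
  · nlinarith [sqNorm_nonneg v, sqNorm_nonneg (A *ᵥ v)]
  · nlinarith [sqNorm_nonneg v, hAC v]

lemma le_pow_mul_add_div_of_le_mul_add {e : ℕ → ℝ} {κ c : ℝ} (hκ₀ : 0 ≤ κ) (hκ₁ : κ < 1)
    (hc : 0 ≤ c) (h : ∀ n, e (n + 1) ≤ κ * e n + c) (n : ℕ) :
    e n ≤ κ ^ n * e 0 + c / (1 - κ) := by
  have hκ : 0 < 1 - κ := sub_pos.2 hκ₁
  induction n with
  | zero => simpa using div_nonneg hc hκ.le
  | succ n ih =>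
    calc e (n + 1) ≤ κ * e n + c := h n
      _ ≤ κ * (κ ^ n * e 0 + c / (1 - κ)) + c := by gcongr
      _ = κ ^ (n + 1) * e 0 + c / (1 - κ) := by field_simp; ring

lemma sqrt_three_mul_lt_one {δ : ℝ} (hδ : δ < 1 / √3) : √3 * δ < 1 := by
  rwa [lt_div_iff₀ (by positivity), mul_comm] at hδ

lemma sqrt_three_mul_sqrt_one_add_le {δ : ℝ} (hδ : δ < 1 / √3) : √3 * √(1 + δ) ≤ 2.18 := by
  have h3 : √3 ^ 2 = 3 := Real.sq_sqrt (by norm_num)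
  have hκ := sqrt_three_mul_lt_one hδ
  -- `3 (1 + δ) < 3 + √3 < 2.18²`
  have hδ3 : 3 * δ < √3 := by nlinarith [Real.sqrt_nonneg 3]
  have hsqrt3 : √3 < 1.75 := by nlinarith [Real.sqrt_nonneg 3]
  rw [← Real.sqrt_mul (by norm_num), Real.sqrt_le_left (by norm_num)]
  linarith

theorem hiIHT_recovery_general (m N₁ N₂ N₃ s₁ s₂ s₃ : ℕ)
    (A : Matrix (Fin m) (Fin N₁ × Fin N₂ × Fin N₃) ℂ)
    (hδ : HiRIPconst3 A (3 * s₁) (3 * s₂) (3 * s₃) < 1 / Real.sqrt 3)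
    (x : Fin N₁ × Fin N₂ × Fin N₃ → ℂ) (hx : HiSparse3 s₁ s₂ s₃ x)
    (z : Fin m → ℂ) (y : Fin m → ℂ) (hy : y = A.mulVec x + z)
    (xs : ℕ → (Fin N₁ × Fin N₂ × Fin N₃ → ℂ))
    (h0 : xs 0 = 0)
    (hstep : ∀ i : ℕ,
      ∃ w : Fin N₁ × Fin N₂ × Fin N₃ → ℂ, HiSparse3 s₁ s₂ s₃ w ∧
        (∀ w' : Fin N₁ × Fin N₂ × Fin N₃ → ℂ, HiSparse3 s₁ s₂ s₃ w' →
          eucNorm ((xs i + A.conjTranspose.mulVec (y - A.mulVec (xs i))) - w) ≤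
            eucNorm ((xs i + A.conjTranspose.mulVec (y - A.mulVec (xs i))) - w')) ∧
        xs (i + 1) = fun j =>
          if w j ≠ 0 then (xs i + A.conjTranspose.mulVec (y - A.mulVec (xs i))) j else 0) :
    Real.sqrt 3 * HiRIPconst3 A (3 * s₁) (3 * s₂) (3 * s₃) < 1 ∧
    ∀ i : ℕ,
      eucNorm (x - xs i) ≤
        (Real.sqrt 3 * HiRIPconst3 A (3 * s₁) (3 * s₂) (3 * s₃)) ^ i * eucNorm x +
          (2.18 / (1 - Real.sqrt 3 * HiRIPconst3 A (3 * s₁) (3 * s₂) (3 * s₃))) * eucNorm z := by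
  obtain ⟨hδ₀, hRIP⟩ := hiRIPconst3_mem A (3 * s₁) (3 * s₂) (3 * s₃)
  set δ := HiRIPconst3 A (3 * s₁) (3 * s₂) (3 * s₃)
  have hκ := sqrt_three_mul_lt_one hδ
  subst hy
  have hsparse : ∀ n, HiSparse3 s₁ s₂ s₃ (xs n)
    | 0 => h0 ▸ hiSparse3_zero
    | n + 1 => by
      obtain ⟨w, hw, -, hnext⟩ := hstep n
      rw [hnext, ite_ne_zero_eq_indicator_support]
      exact hw.of_support_subset Set.support_indicator_subset
  have hcontract : ∀ n, eucNorm (x - xs (n + 1)) ≤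
      √3 * δ * eucNorm (x - xs n) + √3 * √(1 + δ) * eucNorm z := fun n => by
    obtain ⟨w, hw, hmin, hnext⟩ := hstep n
    rw [hnext, ite_ne_zero_eq_indicator_support, mul_assoc, mul_assoc, ← mul_add]
    exact hiIHT_step_error hδ₀ hRIP hx (hsparse n) hw z rfl hmin
  refine ⟨hκ, fun i => ?_⟩
  calc eucNorm (x - xs i)
      ≤ (√3 * δ) ^ i * eucNorm (x - xs 0) + √3 * √(1 + δ) * eucNorm z / (1 - √3 * δ) :=
        le_pow_mul_add_div_of_le_mul_add (e := fun n => eucNorm (x - xs n)) (by positivity) hκ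
          (mul_nonneg (by positivity) (eucNorm_nonneg z)) hcontract i
    _ ≤ (√3 * δ) ^ i * eucNorm x + 2.18 / (1 - √3 * δ) * eucNorm z := by
        rw [h0, sub_zero, div_mul_eq_mul_div]
        have := sub_pos.2 hκ
        gcongr
        · exact eucNorm_nonneg z
        · exact sqrt_three_mul_sqrt_one_add_le hδ

/-- **Recovery guarantee for HiIHT.**  If the sensing matrix `A`
satisfies `δ := δ_{(3s₁,3s₂,3s₃)}(A) < 1/√3`, then for any `(s₁,s₂,s₃)`-Hi-sparse
`x`, noise `z` and measurements `y = Ax + z`, the HiIHT iterates `xs i`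
(starting from `0`, with gradient step followed by projection onto the support
of a best Hi-sparse approximation) satisfy
`‖x − xs i‖ ≤ κ^i ‖x‖ + τ ‖z‖` with `κ = √3·δ < 1` and `τ = 2.18/(1−κ)`. -/
theorem hiIHT_recovery (m N₁ N₂ N₃ s₁ s₂ s₃ : ℕ)
    (hs₁ : 0 < s₁) (hs₂ : 0 < s₂) (hs₃ : 0 < s₃)
    (hN₁ : 3 * s₁ ≤ N₁) (hN₂ : 3 * s₂ ≤ N₂) (hN₃ : 3 * s₃ ≤ N₃)
    (A : Matrix (Fin m) (Fin N₁ × Fin N₂ × Fin N₃) ℂ)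
    (hδ : HiRIPconst3 A (3 * s₁) (3 * s₂) (3 * s₃) < 1 / Real.sqrt 3)
    (x : Fin N₁ × Fin N₂ × Fin N₃ → ℂ) (hx : HiSparse3 s₁ s₂ s₃ x)
    (z : Fin m → ℂ) (y : Fin m → ℂ) (hy : y = A.mulVec x + z)
    (xs : ℕ → (Fin N₁ × Fin N₂ × Fin N₃ → ℂ))
    (h0 : xs 0 = 0)
    (hstep : ∀ i : ℕ,
      ∃ w : Fin N₁ × Fin N₂ × Fin N₃ → ℂ, HiSparse3 s₁ s₂ s₃ w ∧
        (∀ w' : Fin N₁ × Fin N₂ × Fin N₃ → ℂ, HiSparse3 s₁ s₂ s₃ w' →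
          eucNorm ((xs i + A.conjTranspose.mulVec (y - A.mulVec (xs i))) - w) ≤
            eucNorm ((xs i + A.conjTranspose.mulVec (y - A.mulVec (xs i))) - w')) ∧
        xs (i + 1) = fun j =>
          if w j ≠ 0 then (xs i + A.conjTranspose.mulVec (y - A.mulVec (xs i))) j else 0) :
    Real.sqrt 3 * HiRIPconst3 A (3 * s₁) (3 * s₂) (3 * s₃) < 1 ∧
    ∀ i : ℕ,
      eucNorm (x - xs i) ≤
        (Real.sqrt 3 * HiRIPconst3 A (3 * s₁) (3 * s₂) (3 * s₃)) ^ i * eucNorm x +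
          (2.18 / (1 - Real.sqrt 3 * HiRIPconst3 A (3 * s₁) (3 * s₂) (3 * s₃))) * eucNorm z :=
  hiIHT_recovery_general m N₁ N₂ N₃ s₁ s₂ s₃ A hδ x hx z y hy xs h0 hstep
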